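/- Theorem 1: Let 1 < p ≤ 2. If f belongs to the intersection of the Besov-type spaces B^{p,1}_{2(α+1)/p, α} and B^{p,1}_{3/p, α} on the Jacobi hypergroup, then 𝓕(f) ∈ L¹_c(ℝ₊), i.e. ∫₀^∞ |𝓕(f)(t)| dt/|c(t)|² < ∞. -/

import Mathlib

/-!
Cut `(0, ∞)` into the dyadic shells `(t, 2t]`, `t = k 2ⁿ`, `n ∈ ℤ`. On each shell the
Hardy–Littlewood weight is a single power `x^a` (`a = 2(α+1)` for `n ≥ 0`, `a = 3` for `n < 0`)
and `|c(x)|⁻² ≤ k₂ x^(a-1)`. For `δ ∈ (1/t, 2/t]` we have `xδ ≥ 1` on the shell, so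
`c₀ |𝓕f| ≤ |𝓕(τ_δ f - f)|` there; Hölder's inequality and the Hardy–Littlewood inequality for
`τ_δ f - f` bound the shell integral of `|𝓕f| |c|⁻²` by a constant times
`t^(a/p) ω(δ) ≲ t⁻¹ ω(δ) / δ^(a/p+1)`. Averaging over `δ` in the dual shell `(1/t, 2/t]`, whose
length is `1/t`, and summing over `n` (the dual shells are again disjoint) bounds the whole
integral by the two Besov integrals.
-/

open MeasureTheory Set Filter

/-- The `L^p` norm on `(0,∞)` with respect to the weighted measure `w(x) dx`. -/
noncomputable def wLpNorm (w : ℝ → ℝ) (p : ℝ) (f : ℝ → ℂ) : ℝ :=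
  (∫ x in Set.Ioi (0 : ℝ), ‖f x‖ ^ p * w x) ^ (1 / p)

/-- Membership in `L^p((0,∞), w(x) dx)`. -/
def MemW (w : ℝ → ℝ) (p : ℝ) (f : ℝ → ℂ) : Prop :=
  AEMeasurable f (volume.restrict (Set.Ioi (0 : ℝ))) ∧
    IntegrableOn (fun x => ‖f x‖ ^ p * w x) (Set.Ioi (0 : ℝ))

/-- The Jacobi hypergroup setting: the Chébli–Trimèche hypergroup `(ℝ₊, ∗(A))` with
`A(x) = 2^(2ρ) (sinh x)^(2α+1) (cosh x)^(2β+1)`, `α ≥ β ≥ -1/2`, `α ≠ -1/2`,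
`ρ = α + β + 1`.  Its characters are the Jacobi functions `φ_λ`, satisfying
`|1 - φ_λ(t)| ≥ c₀ min{1, (λt)²}`.  The density `cden = |c(λ)|⁻²` is even, continuous
and comparable to `|λ|^(2α+1)` for `|λ| > k` and to `|λ|²` for `|λ| ≤ k`.  The
generalized Fourier transform `FT` is given on `L¹_A` by
`𝓕(f)(λ) = ∫₀^∞ f(x) φ_λ(x) A(x) dx`; it satisfies `‖𝓕 f‖_∞ ≤ ‖f‖_{A,1}`, the
Hausdorff–Young inequality, the Hardy–Littlewood inequality of Lemma 1 and the
translation identity `𝓕(τ_δ f)(λ) = φ_λ(δ) 𝓕(f)(λ)`, where the generalized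
translations `τ_δ` are `L^p_A`-contractions. -/
structure JacobiHypergroup where
  α : ℝ
  β : ℝ
  ρ : ℝ
  hβα : β ≤ α
  hβ : -(1/2) ≤ β
  hα : α ≠ -(1/2)
  hρ : ρ = α + β + 1
  /-- the weight function `A` of the Jacobi hypergroup -/
  A : ℝ → ℝ
  hA : ∀ x : ℝ, 0 ≤ x →
    A x = (2 : ℝ) ^ (2 * ρ) * Real.sinh x ^ (2 * α + 1) * Real.cosh x ^ (2 * β + 1)
  /-- the Jacobi functions `φ_λ`, the characters of the hypergroup -/
  φ : ℝ → ℝ → ℂ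
  c₀ : ℝ
  hc₀ : 0 < c₀
  hφ_lower : ∀ lam t : ℝ, 0 < t →
    c₀ * min 1 ((lam * t) ^ 2) ≤ ‖1 - φ lam t‖
  /-- the density `|c(λ)|⁻²` of the Plancherel measure -/
  cden : ℝ → ℝ
  hcden_cont : Continuous cden
  hcden_even : ∀ x : ℝ, cden (-x) = cden x
  k : ℝ
  k₁ : ℝ
  k₂ : ℝ
  hk : 0 < k
  hk₁ : 0 < k₁
  hk₂ : 0 < k₂
  hcden_hi : ∀ x : ℝ, k < |x| →
    k₁ * |x| ^ (2 * α + 1) ≤ cden x ∧ cden x ≤ k₂ * |x| ^ (2 * α + 1)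
  hcden_lo : ∀ x : ℝ, |x| ≤ k →
    k₁ * |x| ^ (2 : ℝ) ≤ cden x ∧ cden x ≤ k₂ * |x| ^ (2 : ℝ)
  /-- the generalized Fourier transform -/
  FT : (ℝ → ℂ) → ℝ → ℂ
  hFT_def : ∀ f : ℝ → ℂ, MemW A 1 f → ∀ lam : ℝ,
    FT f lam = ∫ x in Set.Ioi (0 : ℝ), f x * φ lam x * (A x : ℂ)
  hFT_meas : ∀ f : ℝ → ℂ, Measurable (FT f)
  hFT_sub : ∀ f g : ℝ → ℂ, ∀ lam : ℝ,
    FT (fun y => f y - g y) lam = FT f lam - FT g lam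
  /-- `‖𝓕 f‖_∞ ≤ ‖f‖_{A,1}` -/
  hFT_sup : ∀ f : ℝ → ℂ, MemW A 1 f → ∀ lam : ℝ,
    ‖FT f lam‖ ≤ wLpNorm A 1 f
  /-- the Hausdorff–Young inequality `‖𝓕 f‖_{c,p'} ≤ C ‖f‖_{A,p}` -/
  hHY : ∀ p p' : ℝ, 1 < p → p ≤ 2 → 1 / p + 1 / p' = 1 →
    ∃ C > (0 : ℝ), ∀ f : ℝ → ℂ, MemW A p f →
      (∫⁻ lam in Set.Ioi (0 : ℝ),
          ENNReal.ofReal (‖FT f lam‖ ^ p' * cden lam)) ^ (1 / p')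
        ≤ ENNReal.ofReal (C * wLpNorm A p f)
  /-- the Hardy–Littlewood inequality of Lemma 1 (with the piecewise weight
  `g(t) = t³` for `t ≤ k`, `g(t) = t^(2(α+1))` for `t > k`) -/
  hHL : ∀ p : ℝ, 1 < p → p ≤ 2 →
    ∃ C > (0 : ℝ), ∀ f : ℝ → ℂ, MemW A p f →
      ∫⁻ x in Set.Ioi (0 : ℝ),
          ENNReal.ofReal ((if x ≤ k then x ^ (3 : ℝ) else x ^ (2 * (α + 1))) ^ (p - 2) *
            ‖FT f x‖ ^ p * cden x)
        ≤ ENNReal.ofReal (C * wLpNorm A p f ^ p)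
  /-- the generalized translation operators -/
  τ : ℝ → (ℝ → ℂ) → ℝ → ℂ
  hτ_contract : ∀ p : ℝ, 1 ≤ p → ∀ (δ : ℝ) (f : ℝ → ℂ), MemW A p f →
    MemW A p (τ δ f) ∧ wLpNorm A p (τ δ f) ≤ wLpNorm A p f
  hτ_diff : ∀ p : ℝ, 1 ≤ p → ∀ (δ : ℝ) (f : ℝ → ℂ), MemW A p f →
    MemW A p (fun y => τ δ f y - f y)
  /-- the translation identity `𝓕(τ_δ f)(λ) = φ_λ(δ) 𝓕(f)(λ)` -/
  hτ_FT : ∀ p : ℝ, 1 ≤ p → p ≤ 2 → ∀ (δ : ℝ) (f : ℝ → ℂ), MemW A p f →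
    ∀ᵐ lam ∂(volume.restrict (Set.Ioi (0 : ℝ))),
      FT (τ δ f) lam = φ lam δ * FT f lam

/-- The modulus of continuity of first order, `ω_{A,p}(f)(δ) = ‖τ_δ f - f‖_{A,p}`. -/
noncomputable def JacobiHypergroup.omega (S : JacobiHypergroup) (p : ℝ)
    (f : ℝ → ℂ) (δ : ℝ) : ℝ :=
  wLpNorm S.A p (fun y => S.τ δ f y - f y)

open scoped ENNReal

theorem pairwise_disjoint_Ioc_mul_two_zpow {r : ℝ} (hr : 0 ≤ r) :
    Pairwise (Function.onFun Disjoint fun n : ℤ => Ioc (r * 2 ^ n) (2 * (r * 2 ^ n))) := by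
  have hmono : Monotone fun n : ℤ => r * (2 : ℝ) ^ n := fun m n hmn =>
    mul_le_mul_of_nonneg_left (zpow_le_zpow_right₀ one_le_two hmn) hr
  simpa only [Order.succ_eq_add_one, zpow_add_one₀ (two_ne_zero' ℝ), mul_comm, mul_left_comm]
    using hmono.pairwise_disjoint_on_Ioc_succ

theorem iUnion_Ioc_mul_two_zpow {r : ℝ} (hr : 0 < r) :
    ⋃ n : ℤ, Ioc (r * 2 ^ n) (2 * (r * 2 ^ n)) = Ioi 0 := by
  ext x
  simp only [mem_iUnion, mem_Ioc, mem_Ioi]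
  constructor
  · rintro ⟨n, hn, -⟩
    exact lt_trans (by positivity) hn
  · intro hx
    obtain ⟨n, hn₁, hn₂⟩ := exists_mem_Ioc_zpow (div_pos hx hr) one_lt_two
    refine ⟨n, ?_, ?_⟩
    · rwa [lt_div_iff₀ hr, mul_comm] at hn₁
    · rw [div_le_iff₀ hr, zpow_add_one₀ two_ne_zero] at hn₂
      linarith

theorem lintegral_Ioi_eq_tsum_Ioc_mul_two_zpow {r : ℝ} (hr : 0 < r) (F : ℝ → ℝ≥0∞) :
    ∫⁻ x in Ioi 0, F x = ∑' n : ℤ, ∫⁻ x in Ioc (r * 2 ^ n) (2 * (r * 2 ^ n)), F x := by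
  rw [← iUnion_Ioc_mul_two_zpow hr,
    lintegral_iUnion (fun _ => measurableSet_Ioc) (pairwise_disjoint_Ioc_mul_two_zpow hr.le)]

theorem tsum_lintegral_Ioc_inv_mul_two_zpow {r : ℝ} (hr : 0 < r) (F : ℝ → ℝ≥0∞) :
    ∑' n : ℤ, ∫⁻ x in Ioc (r * 2 ^ n)⁻¹ (2 * (r * 2 ^ n)⁻¹), F x = ∫⁻ x in Ioi 0, F x := by
  rw [lintegral_Ioi_eq_tsum_Ioc_mul_two_zpow (inv_pos.2 hr), ← (Equiv.neg ℤ).tsum_eq]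
  simp only [Equiv.neg_apply, zpow_neg, mul_inv, inv_inv]

theorem le_setLIntegral_Ioc_of_le_mul {s : ℝ} (hs : 0 < s) {L : ℝ≥0∞} {H : ℝ → ℝ≥0∞}
    (hL : ∀ δ ∈ Ioc s (2 * s), L ≤ ENNReal.ofReal s * H δ) :
    L ≤ ∫⁻ δ in Ioc s (2 * s), H δ := by
  have hs' : ENNReal.ofReal s ≠ 0 := (ENNReal.ofReal_pos.2 hs).ne'
  rw [← ENNReal.mul_le_mul_iff_right hs' ENNReal.ofReal_ne_top, mul_comm]
  calc L * ENNReal.ofReal s = ∫⁻ _ in Ioc s (2 * s), L := by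
        rw [setLIntegral_const, Real.volume_Ioc, two_mul, add_sub_cancel_right]
    _ ≤ ∫⁻ δ in Ioc s (2 * s), ENNReal.ofReal s * H δ := setLIntegral_mono' measurableSet_Ioc hL
    _ = ENNReal.ofReal s * ∫⁻ δ in Ioc s (2 * s), H δ :=
        lintegral_const_mul' _ _ ENNReal.ofReal_ne_top

theorem lintegral_rpow_one_div_le {α : Type*} [MeasurableSpace α] (μ : Measure α) {p q : ℝ}
    (hpq : p.HolderConjugate q) {G : α → ℝ≥0∞} (hG : AEMeasurable G μ) :
    ∫⁻ x, G x ^ (1 / p) ∂μ ≤ (∫⁻ x, G x ∂μ) ^ (1 / p) * μ univ ^ (1 / q) := by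
  have h := ENNReal.lintegral_mul_le_Lp_mul_Lq μ hpq (hG.pow_const (1 / p)) aemeasurable_const
    (g := 1)
  simpa only [Pi.mul_apply, Pi.one_apply, mul_one, ENNReal.one_rpow, lintegral_one,
    ← ENNReal.rpow_mul, one_div_mul_cancel hpq.ne_zero, ENNReal.rpow_one] using h

theorem mul_le_rpow_mul_of_le_mul_rpow {p q a K x s u c : ℝ} (hpq : p.HolderConjugate q)
    (ha : p - 1 ≤ a) (hx : 0 < x) (hxs : x ≤ s) (hu : 0 ≤ u) (hc : 0 ≤ c)
    (hcK : c ≤ K * x ^ (a - 1)) :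
    u * c ≤ ((x ^ a) ^ (p - 2) * u ^ p * c) ^ (1 / p) * (K ^ (1 / q) * s ^ (a / p - 1 / q)) := by
  have hK : 0 ≤ K := nonneg_of_mul_nonneg_left (hc.trans hcK) (by positivity)
  have hsum : 1 / p + 1 / q = 1 := by rw [one_div, one_div]; exact hpq.inv_add_inv_eq_one
  have hq : 1 / q = 1 - 1 / p := by linarith
  have hp0 := hpq.pos
  have he : 0 ≤ a / p - 1 / q := by
    rw [hq, sub_sub_eq_add_sub, le_sub_iff_add_le, zero_add, ← add_div, le_div_iff₀ hp0]
    linarith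
  have hsplit : (x ^ a) ^ (p - 2) * u ^ p * c
      = (x ^ (a * (p - 2) / p) * u * c ^ (1 / p)) ^ p := by
    rw [Real.mul_rpow (by positivity) (by positivity), Real.mul_rpow (by positivity) hu,
      ← Real.rpow_mul hx.le, ← Real.rpow_mul hc, ← Real.rpow_mul hx.le,
      div_mul_cancel₀ _ hpq.ne_zero, one_div_mul_cancel hpq.ne_zero, Real.rpow_one]
  have hexp : (a - 1) * (1 / q) = a * (p - 2) / p + (a / p - 1 / q) := by
    rw [hq]; field_simp; ring
  have hcq : c ^ (1 / q) ≤ K ^ (1 / q) * (x ^ (a * (p - 2) / p) * s ^ (a / p - 1 / q)) := by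
    calc c ^ (1 / q) ≤ (K * x ^ (a - 1)) ^ (1 / q) :=
          Real.rpow_le_rpow hc hcK (one_div_nonneg.2 hpq.symm.nonneg)
      _ = K ^ (1 / q) * (x ^ (a * (p - 2) / p) * x ^ (a / p - 1 / q)) := by
          rw [Real.mul_rpow hK (by positivity), ← Real.rpow_mul hx.le, hexp,
            Real.rpow_add hx]
      _ ≤ K ^ (1 / q) * (x ^ (a * (p - 2) / p) * s ^ (a / p - 1 / q)) := by
          gcongr
  have hc_split : c = c ^ (1 / p) * c ^ (1 / q) := by
    rw [← Real.rpow_add' hc (by rw [hsum]; exact one_ne_zero), hsum, Real.rpow_one]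
  rw [hsplit, ← Real.rpow_mul (by positivity), mul_one_div_cancel hpq.ne_zero, Real.rpow_one]
  calc u * c = u * c ^ (1 / p) * c ^ (1 / q) := by rw [mul_assoc, ← hc_split]
    _ ≤ u * c ^ (1 / p) * (K ^ (1 / q) * (x ^ (a * (p - 2) / p) * s ^ (a / p - 1 / q))) := by
        gcongr
    _ = _ := by ring

theorem rpow_mul_le_of_mem_Ioc_inv {t δ γ ω : ℝ} (ht : 0 < t) (hδ : δ ∈ Ioc t⁻¹ (2 * t⁻¹))
    (hγ : 0 ≤ γ) (hω : 0 ≤ ω) :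
    t ^ γ * ω ≤ 2 ^ (γ + 1) * (t⁻¹ * (ω / δ ^ γ / δ)) := by
  have hδ0 : 0 < δ := (inv_pos.2 ht).trans hδ.1
  have htδ : t * δ ≤ 2 := by
    have := mul_le_mul_of_nonneg_left hδ.2 ht.le
    rwa [mul_left_comm, mul_inv_cancel₀ ht.ne', mul_one] at this
  have hX : 0 ≤ ω / δ ^ γ / δ := by positivity
  calc t ^ γ * ω = (t * δ) ^ γ * δ * (ω / δ ^ γ / δ) := by
        rw [Real.mul_rpow ht.le hδ0.le]
        field_simp
    _ ≤ 2 ^ γ * (2 * t⁻¹) * (ω / δ ^ γ / δ) := by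
        gcongr
        · exact hδ.2
    _ = 2 ^ (γ + 1) * (t⁻¹ * (ω / δ ^ γ / δ)) := by
        rw [Real.rpow_add_one two_ne_zero]; ring

namespace JacobiHypergroup

variable (S : JacobiHypergroup)

/-- The weight `g` of the Hardy–Littlewood inequality `S.hHL`. -/
noncomputable def hlWeight (x : ℝ) : ℝ := if x ≤ S.k then x ^ (3 : ℝ) else x ^ (2 * (S.α + 1))

theorem hlWeight_of_le_k {x : ℝ} (hx : x ≤ S.k) : S.hlWeight x = x ^ (3 : ℝ) := if_pos hx

theorem hlWeight_of_k_lt {x : ℝ} (hx : S.k < x) : S.hlWeight x = x ^ (2 * (S.α + 1)) :=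
  if_neg hx.not_ge

theorem hlWeight_nonneg {x : ℝ} (hx : 0 ≤ x) : 0 ≤ S.hlWeight x := by
  unfold hlWeight
  split_ifs <;> positivity

theorem measurable_hlWeight : Measurable S.hlWeight :=
  Measurable.ite measurableSet_Iic (by fun_prop) (by fun_prop)

theorem one_le_two_mul_α_add_one : 1 ≤ 2 * (S.α + 1) := by
  linarith [S.hβ, S.hβα]

theorem cden_nonneg (x : ℝ) : 0 ≤ S.cden x := by
  rcases le_or_gt |x| S.k with hx | hx
  · exact (mul_nonneg S.hk₁.le (by positivity)).trans (S.hcden_lo x hx).1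
  · exact (mul_nonneg S.hk₁.le (by positivity)).trans (S.hcden_hi x hx).1

theorem A_nonneg {x : ℝ} (hx : 0 ≤ x) : 0 ≤ S.A x := by
  have := Real.sinh_nonneg_iff.2 hx
  have := Real.cosh_pos x
  rw [S.hA x hx]
  positivity

theorem omega_nonneg (p : ℝ) (f : ℝ → ℂ) (δ : ℝ) : 0 ≤ S.omega p f δ :=
  Real.rpow_nonneg (setIntegral_nonneg measurableSet_Ioi fun x hx =>
    mul_nonneg (by positivity) (S.A_nonneg (le_of_lt hx))) _

theorem cden_le_of_le_k {x : ℝ} (hx₀ : 0 < x) (hx : x ≤ S.k) :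
    S.cden x ≤ S.k₂ * x ^ ((3 : ℝ) - 1) := by
  have h := (S.hcden_lo x (by rwa [abs_of_pos hx₀])).2
  rwa [abs_of_pos hx₀, show (2 : ℝ) = 3 - 1 by norm_num] at h

theorem cden_le_of_k_lt {x : ℝ} (hx : S.k < x) :
    S.cden x ≤ S.k₂ * x ^ (2 * (S.α + 1) - 1) := by
  have hx₀ : 0 < x := S.hk.trans hx
  have h := (S.hcden_hi x (by rwa [abs_of_pos hx₀])).2
  rwa [abs_of_pos hx₀, show 2 * S.α + 1 = 2 * (S.α + 1) - 1 by ring] at h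

theorem c₀_mul_norm_FT_le {p : ℝ} (hp : 1 ≤ p) (hp2 : p ≤ 2) {f : ℝ → ℂ} (hf : MemW S.A p f)
    {δ : ℝ} (hδ : 0 < δ) :
    ∀ᵐ x ∂volume.restrict (Ioi 0), 1 ≤ x * δ →
      S.c₀ * ‖S.FT f x‖ ≤ ‖S.FT (fun y => S.τ δ f y - f y) x‖ := by
  filter_upwards [S.hτ_FT p hp hp2 δ f hf] with x hx hxδ
  have hmin : min 1 ((x * δ) ^ 2) = 1 := min_eq_left (by nlinarith)
  have hφ := S.hφ_lower x δ hδ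
  rw [hmin, mul_one] at hφ
  rw [S.hFT_sub, hx, ← sub_one_mul, norm_mul, norm_sub_rev]
  exact mul_le_mul_of_nonneg_right hφ (norm_nonneg _)

def HardyLittlewood (p C : ℝ) : Prop :=
  ∀ g : ℝ → ℂ, MemW S.A p g →
    ∫⁻ x in Ioi 0, ENNReal.ofReal (S.hlWeight x ^ (p - 2) * ‖S.FT g x‖ ^ p * S.cden x)
      ≤ ENNReal.ofReal (C * wLpNorm S.A p g ^ p)

theorem ofReal_c₀_rpow_mul_lintegral_le {p C : ℝ} (hp : 1 ≤ p) (hp2 : p ≤ 2)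
    (hC : S.HardyLittlewood p C) {f : ℝ → ℂ} (hf : MemW S.A p f) {δ : ℝ} (hδ : 0 < δ)
    {E : Set ℝ} (hEm : MeasurableSet E) (hE : E ⊆ Ioi 0) (hEδ : ∀ x ∈ E, 1 ≤ x * δ) :
    ENNReal.ofReal (S.c₀ ^ p) *
        ∫⁻ x in E, ENNReal.ofReal (S.hlWeight x ^ (p - 2) * ‖S.FT f x‖ ^ p * S.cden x)
      ≤ ENNReal.ofReal (C * S.omega p f δ ^ p) := by
  set g := fun y => S.τ δ f y - f y
  have hpoint : ∀ᵐ x ∂volume.restrict E,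
      ENNReal.ofReal (S.c₀ ^ p) *
          ENNReal.ofReal (S.hlWeight x ^ (p - 2) * ‖S.FT f x‖ ^ p * S.cden x)
        ≤ ENNReal.ofReal (S.hlWeight x ^ (p - 2) * ‖S.FT g x‖ ^ p * S.cden x) := by
    filter_upwards [ae_restrict_of_ae_restrict_of_subset hE
      (S.c₀_mul_norm_FT_le hp hp2 hf hδ), ae_restrict_mem hEm] with x hx hxE
    have hw := S.hlWeight_nonneg (hE hxE).le
    rw [← ENNReal.ofReal_mul (by have := S.hc₀; positivity)]
    refine ENNReal.ofReal_le_ofReal ?_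
    calc S.c₀ ^ p * (S.hlWeight x ^ (p - 2) * ‖S.FT f x‖ ^ p * S.cden x)
        = S.hlWeight x ^ (p - 2) * (S.c₀ * ‖S.FT f x‖) ^ p * S.cden x := by
          rw [Real.mul_rpow S.hc₀.le (norm_nonneg _)]; ring
      _ ≤ S.hlWeight x ^ (p - 2) * ‖S.FT g x‖ ^ p * S.cden x := by
          have := S.cden_nonneg x
          gcongr
          · exact mul_nonneg S.hc₀.le (norm_nonneg _)
          · exact hx (hEδ x hxE)
  calc ENNReal.ofReal (S.c₀ ^ p) *
        ∫⁻ x in E, ENNReal.ofReal (S.hlWeight x ^ (p - 2) * ‖S.FT f x‖ ^ p * S.cden x)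
      = ∫⁻ x in E, ENNReal.ofReal (S.c₀ ^ p) *
          ENNReal.ofReal (S.hlWeight x ^ (p - 2) * ‖S.FT f x‖ ^ p * S.cden x) :=
        (lintegral_const_mul' _ _ ENNReal.ofReal_ne_top).symm
    _ ≤ ∫⁻ x in E, ENNReal.ofReal (S.hlWeight x ^ (p - 2) * ‖S.FT g x‖ ^ p * S.cden x) :=
        lintegral_mono_ae hpoint
    _ ≤ ∫⁻ x in Ioi 0, ENNReal.ofReal (S.hlWeight x ^ (p - 2) * ‖S.FT g x‖ ^ p * S.cden x) :=
        lintegral_mono_set hE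
    _ ≤ ENNReal.ofReal (C * S.omega p f δ ^ p) := hC g (S.hτ_diff p hp δ f hf)

theorem lintegral_Ioc_le_omega {p q C : ℝ} (hpq : p.HolderConjugate q) (hp2 : p ≤ 2)
    (hC₀ : 0 ≤ C) (hC : S.HardyLittlewood p C) {f : ℝ → ℂ} (hf : MemW S.A p f) {a : ℝ}
    (ha : p - 1 ≤ a) {t : ℝ} (ht : 0 < t) (hwt : ∀ x ∈ Ioc t (2 * t), S.hlWeight x = x ^ a)
    (hcd : ∀ x ∈ Ioc t (2 * t), S.cden x ≤ S.k₂ * x ^ (a - 1)) {δ : ℝ} (hδ : 0 < δ)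
    (hEδ : ∀ x ∈ Ioc t (2 * t), 1 ≤ x * δ) :
    ∫⁻ x in Ioc t (2 * t), ENNReal.ofReal (‖S.FT f x‖ * S.cden x)
      ≤ ENNReal.ofReal ((C / S.c₀ ^ p) ^ (1 / p) * S.omega p f δ * t ^ (1 / q)
          * (S.k₂ ^ (1 / q) * (2 * t) ^ (a / p - 1 / q))) := by
  have hc₀ := S.hc₀
  have hk₂ := S.hk₂
  have hp₀ := hpq.pos
  have hq₀ := hpq.symm.pos
  have hω := S.omega_nonneg p f δ
  set G : ℝ → ℝ≥0∞ := fun x =>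
    ENNReal.ofReal (S.hlWeight x ^ (p - 2) * ‖S.FT f x‖ ^ p * S.cden x)
  set B := S.k₂ ^ (1 / q) * (2 * t) ^ (a / p - 1 / q)
  have hE : Ioc t (2 * t) ⊆ Ioi 0 := fun x hx => ht.trans hx.1
  have hpoint : ∀ x ∈ Ioc t (2 * t),
      ENNReal.ofReal (‖S.FT f x‖ * S.cden x) ≤ G x ^ (1 / p) * ENNReal.ofReal B := by
    intro x hx
    have hx₀ : 0 < x := hE hx
    have := S.cden_nonneg x
    dsimp only [G]
    rw [hwt x hx, ENNReal.ofReal_rpow_of_nonneg (by positivity) (by positivity),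
      ← ENNReal.ofReal_mul (by positivity)]
    exact ENNReal.ofReal_le_ofReal (mul_le_rpow_mul_of_le_mul_rpow hpq ha hx₀ hx.2
      (norm_nonneg _) (S.cden_nonneg x) (hcd x hx))
  have hGmeas : Measurable G := by
    have := S.hFT_meas f
    have := S.hcden_cont.measurable
    have := S.measurable_hlWeight
    fun_prop
  have hGint : ∫⁻ x in Ioc t (2 * t), G x ≤ ENNReal.ofReal (C / S.c₀ ^ p * S.omega p f δ ^ p) := by
    have hc₀p : 0 < S.c₀ ^ p := by positivity
    rw [show C / S.c₀ ^ p * S.omega p f δ ^ p = C * S.omega p f δ ^ p / S.c₀ ^ p by ring,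
      ENNReal.ofReal_div_of_pos hc₀p, ENNReal.le_div_iff_mul_le (by simp [hc₀p]) (by simp),
      mul_comm]
    exact S.ofReal_c₀_rpow_mul_lintegral_le hpq.lt.le hp2 hC hf hδ measurableSet_Ioc hE hEδ
  calc ∫⁻ x in Ioc t (2 * t), ENNReal.ofReal (‖S.FT f x‖ * S.cden x)
      ≤ ∫⁻ x in Ioc t (2 * t), G x ^ (1 / p) * ENNReal.ofReal B :=
        setLIntegral_mono' measurableSet_Ioc hpoint
    _ = (∫⁻ x in Ioc t (2 * t), G x ^ (1 / p)) * ENNReal.ofReal B :=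
        lintegral_mul_const' _ _ ENNReal.ofReal_ne_top
    _ ≤ (∫⁻ x in Ioc t (2 * t), G x) ^ (1 / p) * ENNReal.ofReal t ^ (1 / q)
          * ENNReal.ofReal B := by
        gcongr
        have h := lintegral_rpow_one_div_le (volume.restrict (Ioc t (2 * t))) hpq
          hGmeas.aemeasurable
        rwa [Measure.restrict_apply_univ, Real.volume_Ioc, show 2 * t - t = t by ring] at h
    _ ≤ ENNReal.ofReal (C / S.c₀ ^ p * S.omega p f δ ^ p) ^ (1 / p)
          * ENNReal.ofReal t ^ (1 / q) * ENNReal.ofReal B := by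
        gcongr
    _ = _ := by
        rw [ENNReal.ofReal_rpow_of_nonneg (by positivity) (by positivity),
          ENNReal.ofReal_rpow_of_nonneg ht.le (by positivity), ← ENNReal.ofReal_mul (by positivity),
          ← ENNReal.ofReal_mul (by positivity), Real.mul_rpow (by positivity) (by positivity),
          ← Real.rpow_mul hω, mul_one_div_cancel hpq.ne_zero, Real.rpow_one]

theorem exists_lintegral_Ioc_le_of_mem_Ioc_inv {p : ℝ} (hp : 1 < p) (hp2 : p ≤ 2)
    {f : ℝ → ℂ} (hf : MemW S.A p f) {a : ℝ} (ha : p - 1 ≤ a) :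
    ∃ M : ℝ, ∀ t > 0, (∀ x ∈ Ioc t (2 * t), S.hlWeight x = x ^ a) →
      (∀ x ∈ Ioc t (2 * t), S.cden x ≤ S.k₂ * x ^ (a - 1)) →
      ∀ δ ∈ Ioc t⁻¹ (2 * t⁻¹),
        ∫⁻ x in Ioc t (2 * t), ENNReal.ofReal (‖S.FT f x‖ * S.cden x)
          ≤ ENNReal.ofReal t⁻¹ *
              (ENNReal.ofReal M * ENNReal.ofReal (S.omega p f δ / δ ^ (a / p) / δ)) := by
  obtain ⟨C, hC₀, hC⟩ := S.hHL p hp hp2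
  have hc₀ := S.hc₀
  have hk₂ := S.hk₂
  set q := p.conjExponent
  have hpq : p.HolderConjugate q := .conjExponent hp
  have hp₀ := hpq.pos
  set P := (C / S.c₀ ^ p) ^ (1 / p) * S.k₂ ^ (1 / q) * 2 ^ (a / p - 1 / q)
  have hP : 0 ≤ P := by positivity
  refine ⟨P * 2 ^ (a / p + 1), fun t ht hwt hcd δ hδ => ?_⟩
  have hδ₀ : 0 < δ := (inv_pos.2 ht).trans hδ.1
  have hEδ : ∀ x ∈ Ioc t (2 * t), 1 ≤ x * δ := fun x hx => by
    have := mul_lt_mul'' hx.1 hδ.1 ht.le (inv_pos.2 ht).le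
    rw [mul_inv_cancel₀ ht.ne'] at this
    exact this.le
  have hω := S.omega_nonneg p f δ
  refine (S.lintegral_Ioc_le_omega hpq hp2 hC₀.le hC hf ha ht hwt hcd hδ₀ hEδ).trans ?_
  rw [← ENNReal.ofReal_mul (by positivity), ← ENNReal.ofReal_mul (by positivity)]
  refine ENNReal.ofReal_le_ofReal ?_
  have ht_exp : t ^ (1 / q) * t ^ (a / p - 1 / q) = t ^ (a / p) := by
    rw [← Real.rpow_add ht, add_sub_cancel]
  calc (C / S.c₀ ^ p) ^ (1 / p) * S.omega p f δ * t ^ (1 / q)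
        * (S.k₂ ^ (1 / q) * (2 * t) ^ (a / p - 1 / q))
      = P * (t ^ (a / p) * S.omega p f δ) := by
        rw [Real.mul_rpow two_pos.le ht.le, ← ht_exp]
        ring
    _ ≤ P * (2 ^ (a / p + 1) * (t⁻¹ * (S.omega p f δ / δ ^ (a / p) / δ))) :=
        mul_le_mul_of_nonneg_left
          (rpow_mul_le_of_mem_Ioc_inv ht hδ (div_nonneg (by linarith) hp₀.le) hω) hP
    _ = t⁻¹ * (P * 2 ^ (a / p + 1) * (S.omega p f δ / δ ^ (a / p) / δ)) := by ring

theorem exists_lintegral_Ioc_le {p : ℝ} (hp : 1 < p) (hp2 : p ≤ 2)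
    {f : ℝ → ℂ} (hf : MemW S.A p f) {a : ℝ} (ha : p - 1 ≤ a) :
    ∃ M : ℝ, ∀ t > 0, (∀ x ∈ Ioc t (2 * t), S.hlWeight x = x ^ a) →
      (∀ x ∈ Ioc t (2 * t), S.cden x ≤ S.k₂ * x ^ (a - 1)) →
        ∫⁻ x in Ioc t (2 * t), ENNReal.ofReal (‖S.FT f x‖ * S.cden x)
          ≤ ENNReal.ofReal M *
              ∫⁻ δ in Ioc t⁻¹ (2 * t⁻¹), ENNReal.ofReal (S.omega p f δ / δ ^ (a / p) / δ) := by
  obtain ⟨M, hM⟩ := S.exists_lintegral_Ioc_le_of_mem_Ioc_inv hp hp2 hf ha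
  refine ⟨M, fun t ht hwt hcd => ?_⟩
  rw [← lintegral_const_mul' _ _ ENNReal.ofReal_ne_top]
  exact le_setLIntegral_Ioc_of_le_mul (inv_pos.2 ht) (hM t ht hwt hcd)

theorem exists_lintegral_Ioc_mul_two_zpow_le {p : ℝ} (hp : 1 < p) (hp2 : p ≤ 2)
    {f : ℝ → ℂ} (hf : MemW S.A p f) :
    ∃ M₁ M₂ : ℝ, ∀ n : ℤ,
      ∫⁻ x in Ioc (S.k * 2 ^ n) (2 * (S.k * 2 ^ n)), ENNReal.ofReal (‖S.FT f x‖ * S.cden x)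
        ≤ ENNReal.ofReal M₁ * (∫⁻ δ in Ioc (S.k * 2 ^ n)⁻¹ (2 * (S.k * 2 ^ n)⁻¹),
              ENNReal.ofReal (S.omega p f δ / δ ^ (2 * (S.α + 1) / p) / δ))
          + ENNReal.ofReal M₂ * ∫⁻ δ in Ioc (S.k * 2 ^ n)⁻¹ (2 * (S.k * 2 ^ n)⁻¹),
              ENNReal.ofReal (S.omega p f δ / δ ^ (3 / p) / δ) := by
  obtain ⟨M₁, hM₁⟩ := S.exists_lintegral_Ioc_le hp hp2 hf (a := 2 * (S.α + 1))
    (by linarith [S.one_le_two_mul_α_add_one])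
  obtain ⟨M₂, hM₂⟩ := S.exists_lintegral_Ioc_le hp hp2 hf (a := 3) (by linarith)
  refine ⟨M₁, M₂, fun n => ?_⟩
  have hk := S.hk
  have ht : 0 < S.k * 2 ^ n := by positivity
  rcases le_or_gt 0 n with hn | hn
  · have hkt : S.k ≤ S.k * 2 ^ n := le_mul_of_one_le_right hk.le (one_le_zpow₀ one_le_two hn)
    exact (hM₁ _ ht (fun x hx => S.hlWeight_of_k_lt (hkt.trans_lt hx.1))
      (fun x hx => S.cden_le_of_k_lt (hkt.trans_lt hx.1))).trans le_self_add
  · have htk : 2 * (S.k * 2 ^ n) ≤ S.k := by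
      rw [mul_left_comm, ← zpow_one_add₀ two_ne_zero]
      exact mul_le_of_le_one_right hk.le (zpow_le_one_of_nonpos₀ one_le_two (by omega))
    exact (hM₂ _ ht (fun x hx => S.hlWeight_of_le_k (hx.2.trans htk))
      (fun x hx => S.cden_le_of_le_k (ht.trans hx.1) (hx.2.trans htk))).trans le_add_self

end JacobiHypergroup

/-- **Theorem 1**: let `1 < p ≤ 2`.  If `f` belongs to the intersection of the
Besov-type spaces `B^{p,1}_{2(α+1)/p, α}` and `B^{p,1}_{3/p, α}` on the Jacobi
hypergroup (i.e. `f ∈ L^p_A(ℝ₊)` and `∫₀^∞ (ω_{A,p}(f)(x)/x^γ) dx/x < ∞` for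
`γ = 2(α+1)/p` and `γ = 3/p`), then `𝓕(f) ∈ L¹_c(ℝ₊)`, that is,
`∫₀^∞ |𝓕(f)(t)| dt/|c(t)|² < ∞`. -/
theorem theorem_one (S : JacobiHypergroup) (p : ℝ) (hp : 1 < p) (hp2 : p ≤ 2)
    (f : ℝ → ℂ) (hf : MemW S.A p f)
    (hBesov1 : ∫⁻ x in Set.Ioi (0 : ℝ),
        ENNReal.ofReal (S.omega p f x / x ^ (2 * (S.α + 1) / p) / x) < ⊤)
    (hBesov2 : ∫⁻ x in Set.Ioi (0 : ℝ),
        ENNReal.ofReal (S.omega p f x / x ^ (3 / p) / x) < ⊤) :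
    ∫⁻ t in Set.Ioi (0 : ℝ),
        ENNReal.ofReal (‖S.FT f t‖ * S.cden t) < ⊤ := by
  obtain ⟨M₁, M₂, hshell⟩ := S.exists_lintegral_Ioc_mul_two_zpow_le hp hp2 hf
  calc ∫⁻ x in Ioi 0, ENNReal.ofReal (‖S.FT f x‖ * S.cden x)
      = ∑' n : ℤ, ∫⁻ x in Ioc (S.k * 2 ^ n) (2 * (S.k * 2 ^ n)),
          ENNReal.ofReal (‖S.FT f x‖ * S.cden x) :=
        lintegral_Ioi_eq_tsum_Ioc_mul_two_zpow S.hk _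
    _ ≤ ∑' n : ℤ, _ := ENNReal.tsum_le_tsum hshell
    _ = ENNReal.ofReal M₁ * (∫⁻ δ in Ioi 0,
            ENNReal.ofReal (S.omega p f δ / δ ^ (2 * (S.α + 1) / p) / δ))
        + ENNReal.ofReal M₂ * ∫⁻ δ in Ioi 0, ENNReal.ofReal (S.omega p f δ / δ ^ (3 / p) / δ) := by
        rw [ENNReal.tsum_add, ENNReal.tsum_mul_left, ENNReal.tsum_mul_left,
          tsum_lintegral_Ioc_inv_mul_two_zpow S.hk, tsum_lintegral_Ioc_inv_mul_two_zpow S.hk]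
    _ < ⊤ := ENNReal.add_lt_top.2
        ⟨ENNReal.mul_lt_top ENNReal.ofReal_lt_top hBesov1,
          ENNReal.mul_lt_top ENNReal.ofReal_lt_top hBesov2⟩
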